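/- Let (G,φ) be a weighted graph, let r > 0, let u,v ∈ V(G), and let (H,φ') = (G,φ,r). For every real number k ≥ 0, there exists a path in G between u and v with length k in (G,φ) if and only if there exists a path in H between u and v with length k in (H,φ'). In particular, d_{(G,φ)}(u,v) = d_{(H,φ')}(u,v). -/

import Mathlib

open scoped ENNReal

/-- The length of a walk in an edge-weighted graph: the sum of the weights of its edges. -/
def walkLen {V : Type} {G : SimpleGraph V} (w : Sym2 V → ℝ) {x y : V} (p : G.Walk x y) : ℝ :=
  (p.edges.map w).sum

/-- The distance between two vertices of an edge-weighted graph: the infimum of the lengths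
of paths between them (`⊤` if there is no such path). -/
noncomputable def wDist {V : Type} (G : SimpleGraph V) (w : Sym2 V → ℝ) (x y : V) : ℝ≥0∞ :=
  ⨅ q : {q : G.Walk x y // q.IsPath}, ENNReal.ofReal (walkLen w q.1)

lemma wDist_comm {V : Type} (G : SimpleGraph V) (w : Sym2 V → ℝ) (x y : V) :
    wDist G w x y = wDist G w y x := by
  have key : ∀ a b : V, wDist G w a b ≤ wDist G w b a := by
    intro a b
    refine le_iInf fun q => ?_
    refine iInf_le_of_le ⟨q.1.reverse, q.2.reverse⟩ ?_
    simp [walkLen, List.sum_reverse]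
  exact le_antisymm (key x y) (key y x)

/-- The power graph: two distinct vertices are adjacent iff their weighted distance
is at most `r`. -/
noncomputable def powerGraph {V : Type} (G : SimpleGraph V) (w : Sym2 V → ℝ) (r : ℝ) :
    SimpleGraph V where
  Adj x y := x ≠ y ∧ wDist G w x y ≤ ENNReal.ofReal r
  symm := ⟨by
    rintro x y ⟨hne, hle⟩
    exact ⟨hne.symm, by rwa [wDist_comm]⟩⟩
  loopless := ⟨fun x h => h.1 rfl⟩

/-- The unit-length (hop) distance in an unweighted graph. -/
noncomputable def hopDist {V : Type} (L : SimpleGraph V) (x y : V) : ℝ≥0∞ :=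
  ⨅ q : L.Walk x y, (q.length : ℝ≥0∞)

/-- Same-colour adjacency within a vertex set `A`. -/
def colorGraph {V : Type} (K : SimpleGraph V) (A : Set V) {m : ℕ} (c : V → Fin m) :
    SimpleGraph V where
  Adj x y := K.Adj x y ∧ x ∈ A ∧ y ∈ A ∧ c x = c y
  symm := ⟨by
    rintro x y ⟨h, hx, hy, hc⟩
    exact ⟨h.symm, hy, hx, hc.symm⟩⟩
  loopless := ⟨fun x h => K.loopless.irrefl x h.1⟩

/-- The colouring `c` of the subgraph of `K` induced on `A` has weak diameter, measured by the
hop distance of `L`, at most `N`: any two vertices of a monochromatic component of `K ↾ A` are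
at hop distance at most `N` in `L`. -/
def HasWeakDiamLE {V : Type} (K : SimpleGraph V) (A : Set V) (L : SimpleGraph V) {m : ℕ}
    (c : V → Fin m) (N : ℝ) : Prop :=
  ∀ x ∈ A, ∀ y ∈ A, (colorGraph K A c).Reachable x y → hopDist L x y ≤ ENNReal.ofReal N

/-- `nbhd G w r S`: vertices joined to `S` by a path of weighted length at most `r`. -/
def nbhd {V : Type} (G : SimpleGraph V) (w : Sym2 V → ℝ) (r : ℝ) (S : Set V) : Set V :=
  {v | ∃ s ∈ S, ∃ q : G.Walk v s, q.IsPath ∧ walkLen w q ≤ r}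

/-- Deleting a set of vertices (keeping them as isolated vertices of the ambient type). -/
def delVerts {V : Type} (G : SimpleGraph V) (Z : Set V) : SimpleGraph V where
  Adj x y := G.Adj x y ∧ x ∉ Z ∧ y ∉ Z
  symm := ⟨by
    rintro x y ⟨h, hx, hy⟩
    exact ⟨h.symm, hy, hx⟩⟩
  loopless := ⟨fun x h => G.loopless.irrefl x h.1⟩

/-- A weighted graph: a finite simple graph together with positive edge weights. -/
structure WGraph : Type 1 where
  V : Type
  fin : Finite V
  G : SimpleGraph V
  w : Sym2 V → ℝ
  pos : ∀ e ∈ G.edgeSet, 0 < w e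

/-- The extended metric on the vertex set of a weighted graph. -/
noncomputable def WGraph.dist (W : WGraph) : W.V → W.V → ℝ≥0∞ := wDist W.G W.w

/-- All edge weights lie in `(0, ℓ]`. -/
def WGraph.IsBounded (W : WGraph) (ℓ : ℝ) : Prop := ∀ e ∈ W.G.edgeSet, W.w e ≤ ℓ

/-- `f` is an `n`-dimensional control function for the extended metric `d`. -/
def IsControlOn {X : Type} (d : X → X → ℝ≥0∞) (n : ℕ) (f : ℝ → ℝ) : Prop :=
  ∀ r : ℝ, 0 < r → ∃ U : Fin (n + 1) → Set (Set X),
    (∀ x : X, ∃ i, ∃ s ∈ U i, x ∈ s) ∧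
    (∀ i, ∀ s ∈ U i, ∀ t ∈ U i, s ≠ t → ∀ x ∈ s, ∀ y ∈ t, ENNReal.ofReal r < d x y) ∧
    (∀ i, ∀ s ∈ U i, ∀ x ∈ s, ∀ y ∈ s, d x y ≤ ENNReal.ofReal (f r))

/-- The asymptotic dimension of a class of weighted graphs is at most `n`. -/
def asdimLE (F : Set WGraph) (n : ℕ) : Prop :=
  ∃ f : ℝ → ℝ, (∀ x, 0 < x → 0 < f x) ∧ ∀ W ∈ F, IsControlOn W.dist n f

/-- The Assouad–Nagata dimension of a class of weighted graphs is at most `n`: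
some dilation is a common `n`-dimensional control function. -/
def ANdimLE (F : Set WGraph) (n : ℕ) : Prop :=
  ∃ (f : ℝ → ℝ) (c : ℝ), 0 < c ∧ (∀ x, 0 < x → 0 < f x) ∧ (∀ x, 0 < x → f x ≤ c * x) ∧
    ∀ W ∈ F, IsControlOn W.dist n f

/-- `H` is a minor of `G`: there are pairwise disjoint nonempty connected branch sets in `G`,
one for each vertex of `H`, with branch sets of adjacent vertices joined by an edge. -/
def IsMinorOf {α β : Type} (H : SimpleGraph β) (G : SimpleGraph α) : Prop :=
  ∃ B : β → Set α,
    (∀ h, (B h).Nonempty) ∧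
    (∀ h h', h ≠ h' → Disjoint (B h) (B h')) ∧
    (∀ h, (G.induce (B h)).Connected) ∧
    (∀ h h', H.Adj h h' → ∃ a ∈ B h, ∃ b ∈ B h', G.Adj a b)
/-- Vertices of the refinement `(G,w,r)`: original vertices plus, for each edge `e = xy` of `G`
and each end `x`, internal vertices `(x,y,i)`, `1 ≤ i ≤ ⌈w(e)/r⌉ - 1`, of the path `P_{e,x}`. -/
abbrev SubVert {V : Type} (G : SimpleGraph V) (w : Sym2 V → ℝ) (r : ℝ) : Type :=
  V ⊕ {p : V × V × ℕ // G.Adj p.1 p.2.1 ∧ 1 ≤ p.2.2 ∧ p.2.2 ≤ ⌈w s(p.1, p.2.1) / r⌉₊ - 1}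

def subRel {V : Type} (G : SimpleGraph V) (w : Sym2 V → ℝ) (r : ℝ) :
    SubVert G w r → SubVert G w r → Prop
  | Sum.inl x, Sum.inl y => G.Adj x y ∧ ⌈w s(x, y) / r⌉₊ = 1
  | Sum.inl x, Sum.inr q => (x = q.1.1 ∧ q.1.2.2 = 1) ∨
      (x = q.1.2.1 ∧ q.1.2.2 = ⌈w s(q.1.1, q.1.2.1) / r⌉₊ - 1)
  | Sum.inr _, Sum.inl _ => False
  | Sum.inr p, Sum.inr q => p.1.1 = q.1.1 ∧ p.1.2.1 = q.1.2.1 ∧ q.1.2.2 = p.1.2.2 + 1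

/-- The underlying graph of the refinement `(G,w,r)`: each edge `e = xy` is replaced by two
internally disjoint paths `P_{e,x}`, `P_{e,y}` between `x` and `y` with `⌈w(e)/r⌉` edges
(which degenerate to the single original edge when `⌈w(e)/r⌉ = 1`). -/
def subGraph {V : Type} (G : SimpleGraph V) (w : Sym2 V → ℝ) (r : ℝ) :
    SimpleGraph (SubVert G w r) :=
  SimpleGraph.fromRel (subRel G w r)

/-- The edge weights of the refinement `(G,w,r)`: in `P_{e,x}` the edge incident with `x` has
weight `w(e) - r·(⌈w(e)/r⌉ - 1)` and all other edges have weight `r`. -/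
noncomputable def subW {V : Type} (G : SimpleGraph V) (w : Sym2 V → ℝ) (r : ℝ) :
    Sym2 (SubVert G w r) → ℝ :=
  letI : DecidableEq V := Classical.decEq V
  Sym2.lift ⟨fun a b =>
    match a, b with
    | Sum.inl x, Sum.inl y => w s(x, y)
    | Sum.inl x, Sum.inr q =>
        if x = q.1.1 ∧ q.1.2.2 = 1 then
          w s(q.1.1, q.1.2.1) - r * ((⌈w s(q.1.1, q.1.2.1) / r⌉₊ - 1 : ℕ) : ℝ)
        else r
    | Sum.inr q, Sum.inl x =>
        if x = q.1.1 ∧ q.1.2.2 = 1 then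
          w s(q.1.1, q.1.2.1) - r * ((⌈w s(q.1.1, q.1.2.1) / r⌉₊ - 1 : ℕ) : ℝ)
        else r
    | Sum.inr _, Sum.inr _ => r, by
      rintro (x | p) (y | q)
      · show w s(x, y) = w s(y, x)
        rw [Sym2.eq_swap]
      · rfl
      · rfl
      · rfl⟩

/-- The power graph `(G,w)^r`, whose vertex set is the vertex set of the refinement `(G,w,r)`,
two distinct vertices being adjacent iff their distance in `(G,w,r)` is at most `r`. -/
noncomputable def subPower {V : Type} (G : SimpleGraph V) (w : Sym2 V → ℝ) (r : ℝ) :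
    SimpleGraph (SubVert G w r) :=
  powerGraph (subGraph G w r) (subW G w r) r

/-!
Each edge `xy` of `G` is replaced in `(G,w,r)` by two paths of length `w(xy)` whose inner vertices
have no neighbours besides their two path neighbours. Lifting a path of `G` edge by edge through
one of these paths preserves its length. Conversely, a path of `(G,w,r)` between original vertices
that enters one of them at an end can only leave it at the other end, so it is a concatenation of
such whole paths and projects to a path of `G` of the same length. Both distances are infima over
the same set of path lengths.
-/

open SimpleGraph Finset

lemma SimpleGraph.Walk.IsPath.append {V' : Type} {H : SimpleGraph V'} {x y z : V'}
    {p : H.Walk x y} {q : H.Walk y z} (hp : p.IsPath) (hq : q.IsPath)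
    (hpq : ∀ a ∈ p.support, a ∈ q.support → a = y) : (p.append q).IsPath := by
  rw [Walk.isPath_def, Walk.support_append]
  refine hp.support_nodup.append hq.support_nodup.tail fun a hap haq => ?_
  obtain rfl := hpq a hap (List.mem_of_mem_tail haq)
  have := hq.support_nodup
  rw [← Walk.cons_tail_support, List.nodup_cons] at this
  exact this.1 haq

section Generic

variable {V' : Type} {H : SimpleGraph V'} (wt : Sym2 V' → ℝ)

@[simp]
lemma walkLen_nil {x : V'} : walkLen wt (Walk.nil : H.Walk x x) = 0 := rfl

@[simp]
lemma walkLen_cons {x y z : V'} (h : H.Adj x y) (p : H.Walk y z) :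
    walkLen wt (Walk.cons h p) = wt s(x, y) + walkLen wt p := by
  simp [walkLen]

@[simp]
lemma walkLen_append {x y z : V'} (p : H.Walk x y) (q : H.Walk y z) :
    walkLen wt (p.append q) = walkLen wt p + walkLen wt q := by
  simp [walkLen]

@[simp]
lemma walkLen_copy {x y x' y' : V'} (p : H.Walk x y) (hx : x = x') (hy : y = y') :
    walkLen wt (p.copy hx hy) = walkLen wt p := by
  simp [walkLen]

lemma wDist_le_of_forall_isPath {V : Type} {G : SimpleGraph V} {w : Sym2 V → ℝ}
    {x y : V} {x' y' : V'}
    (h : ∀ q : H.Walk x' y', q.IsPath → ∃ p : G.Walk x y, p.IsPath ∧ walkLen w p = walkLen wt q) :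
    wDist G w x y ≤ wDist H wt x' y' := by
  refine le_iInf fun q => ?_
  obtain ⟨p, hp, hlen⟩ := h q.1 q.2
  exact iInf_le_of_le ⟨p, hp⟩ (by rw [hlen])

/-- A path entering a bare chain `f 0, …, f N` at one end must run through to the other. -/
def IsBareChain (H : SimpleGraph V') (f : ℕ → V') (N : ℕ) : Prop :=
  ∀ k, 0 < k → k < N → ∀ b, H.Adj (f k) b → b = f (k - 1) ∨ b = f (k + 1)

lemma IsBareChain.reflect {f : ℕ → V'} {N : ℕ} (hf : IsBareChain H f N) :
    IsBareChain H (fun k => f (N - k)) N := by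
  intro k hk hkN b hb
  rcases hf (N - k) (by omega) (by omega) b hb with rfl | rfl
  · exact Or.inr (congr_arg f (by omega))
  · exact Or.inl (congr_arg f (by omega))

variable {f : ℕ → V'} {N : ℕ} {t : V'}

lemma IsBareChain.exists_tail_of_isPath (hf : IsBareChain H f N)
    (ht : ∀ k, 0 < k → k < N → f k ≠ t) {s : V'} (q : H.Walk s t) (hq : q.IsPath) {i : ℕ}
    (hi : i < N) (hs : s = f (i + 1)) (hprev : f i ∉ q.support) :
    ∃ q' : H.Walk (f N) t, q'.IsPath ∧
      walkLen wt q = ∑ k ∈ Ico (i + 1) N, wt s(f k, f (k + 1)) + walkLen wt q' ∧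
      q'.length ≤ q.length ∧ q'.support ⊆ q.support := by
  obtain ⟨d, hd⟩ : ∃ d, N = i + 1 + d := ⟨N - (i + 1), by omega⟩
  induction d generalizing i s with
  | zero =>
    subst hd hs
    exact ⟨q, hq, by simp, le_rfl, fun _ => id⟩
  | succ d ih =>
    cases q with
    | nil => exact absurd hs.symm (ht _ (by omega) (by omega))
    | @cons _ b _ h p =>
      subst hs
      have hb : b = f (i + 1 + 1) := by
        refine (hf (i + 1) (by omega) (by omega) b h).resolve_left fun hb => hprev ?_
        rw [Nat.add_sub_cancel] at hb
        rw [Walk.support_cons, ← hb]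
        exact List.mem_cons_of_mem _ p.start_mem_support
      obtain ⟨q', hq', hlen, hle, hsub⟩ :=
        ih p hq.of_cons (by omega) hb ((Walk.cons_isPath_iff _ _).mp hq).2 (by omega)
      refine ⟨q', hq', ?_, by rw [Walk.length_cons]; omega, fun z hz => by simp [hsub hz]⟩
      rw [walkLen_cons, hlen, hb, Finset.sum_eq_sum_Ico_succ_bot (a := i + 1) (by omega)]
      ring

lemma IsBareChain.exists_tail_of_isPath_cons (hf : IsBareChain H f N) (hN : 0 < N)
    (ht : ∀ k, 0 < k → k < N → f k ≠ t) {s₀ s₁ e : V'} (h0 : f 0 = s₀) (h1 : f 1 = s₁)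
    (he : f N = e) (h : H.Adj s₀ s₁) (q : H.Walk s₁ t) (hq : (Walk.cons h q).IsPath) :
    ∃ q' : H.Walk e t, q'.IsPath ∧
      walkLen wt (Walk.cons h q) = ∑ k ∈ range N, wt s(f k, f (k + 1)) + walkLen wt q' ∧
      q'.length < (Walk.cons h q).length ∧ q'.support ⊆ q.support ∧ s₀ ∉ q'.support := by
  subst h0 h1 he
  have hprev := ((Walk.cons_isPath_iff _ _).mp hq).2
  obtain ⟨q', hq', hlen, hle, hsub⟩ :=
    hf.exists_tail_of_isPath wt ht q hq.of_cons hN rfl hprev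
  refine ⟨q', hq', ?_, by rw [Walk.length_cons]; omega, hsub, fun h => hprev (hsub h)⟩
  rw [walkLen_cons, hlen, range_eq_Ico, sum_eq_sum_Ico_succ_bot hN]
  ring

lemma exists_isPath_of_forall_adj (hadj : ∀ k < N, H.Adj (f k) (f (k + 1)))
    (hinj : Set.InjOn f (Set.Iic N)) :
    ∃ c : H.Walk (f 0) (f N), c.IsPath ∧
      walkLen wt c = ∑ k ∈ range N, wt s(f k, f (k + 1)) ∧ ∀ z ∈ c.support, ∃ k ≤ N, z = f k := by
  suffices ∀ d i, i + d = N → ∃ c : H.Walk (f i) (f N), c.IsPath ∧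
      walkLen wt c = ∑ k ∈ Ico i N, wt s(f k, f (k + 1)) ∧
      ∀ z ∈ c.support, ∃ k, i ≤ k ∧ k ≤ N ∧ z = f k by
    obtain ⟨c, hc, hlen, hsupp⟩ := this N 0 (zero_add N)
    refine ⟨c, hc, by rw [hlen, range_eq_Ico], fun z hz => ?_⟩
    obtain ⟨k, -, hk, rfl⟩ := hsupp z hz
    exact ⟨k, hk, rfl⟩
  intro d
  induction d with
  | zero =>
    rintro i rfl
    exact ⟨Walk.nil, Walk.IsPath.nil, by simp, fun z hz => ⟨i, le_rfl, le_rfl, by simpa using hz⟩⟩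
  | succ d ih =>
    intro i hi
    obtain ⟨c, hc, hlen, hsupp⟩ := ih (i + 1) (by omega)
    refine ⟨Walk.cons (hadj i (by omega)) c, ?_, ?_, ?_⟩
    · refine (Walk.cons_isPath_iff _ _).mpr ⟨hc, fun hi' => ?_⟩
      obtain ⟨k, hik, hkN, hk⟩ := hsupp _ hi'
      have := hinj (Set.mem_Iic.mpr (by omega : i ≤ N)) (Set.mem_Iic.mpr hkN) hk
      omega
    · rw [walkLen_cons, hlen, sum_eq_sum_Ico_succ_bot (by omega : i < N)]
    · intro z hz
      rw [Walk.support_cons, List.mem_cons] at hz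
      rcases hz with rfl | hz
      · exact ⟨i, le_rfl, by omega, rfl⟩
      · obtain ⟨k, hik, hkN, rfl⟩ := hsupp z hz
        exact ⟨k, by omega, hkN, rfl⟩

end Generic

section Subdivision

variable {V : Type} {G : SimpleGraph V} (w : Sym2 V → ℝ) (r : ℝ) {x y : V}

/-- The `k`-th vertex of the path `P_{xy,x}`, from `inl x` (`k = 0`) to `inl y`
(`k = ⌈w(xy)/r⌉`). -/
noncomputable def subPathVert (hxy : G.Adj x y) (k : ℕ) : SubVert G w r :=
  if hk : 0 < k ∧ k < ⌈w s(x, y) / r⌉₊ then Sum.inr ⟨(x, y, k), hxy, hk.1, by dsimp only; omega⟩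
  else if k = 0 then Sum.inl x else Sum.inl y

variable (hxy : G.Adj x y)

@[simp]
lemma subPathVert_zero : subPathVert w r hxy 0 = Sum.inl x := by
  simp [subPathVert]

lemma subPathVert_of_lt {k : ℕ} (hk : 0 < k) (hkN : k < ⌈w s(x, y) / r⌉₊) :
    subPathVert w r hxy k = Sum.inr ⟨(x, y, k), hxy, hk, by dsimp only; omega⟩ := by
  simp [subPathVert, hk, hkN]

lemma subPathVert_ceil (hN : 0 < ⌈w s(x, y) / r⌉₊) :
    subPathVert w r hxy ⌈w s(x, y) / r⌉₊ = Sum.inl y := by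
  simp [subPathVert, hN.ne']

lemma subPathVert_adj {k : ℕ} (hk : k < ⌈w s(x, y) / r⌉₊) :
    (subGraph G w r).Adj (subPathVert w r hxy k) (subPathVert w r hxy (k + 1)) := by
  rw [subGraph, SimpleGraph.fromRel_adj]
  unfold subPathVert
  split_ifs <;> (try omega) <;> simp_all [subRel, hxy.ne, -Nat.ceil_le, -Nat.ceil_pos] <;> omega

lemma subW_subPathVert {k : ℕ} (hk : k < ⌈w s(x, y) / r⌉₊) :
    subW G w r s(subPathVert w r hxy k, subPathVert w r hxy (k + 1)) =
      if k = 0 then w s(x, y) - r * ((⌈w s(x, y) / r⌉₊ - 1 : ℕ) : ℝ) else r := by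
  unfold subPathVert
  split_ifs <;> (try omega) <;> simp_all [subW, hxy.ne']

lemma sum_subW_subPathVert (hN : 0 < ⌈w s(x, y) / r⌉₊) :
    ∑ k ∈ range ⌈w s(x, y) / r⌉₊,
      subW G w r s(subPathVert w r hxy k, subPathVert w r hxy (k + 1)) = w s(x, y) := by
  obtain ⟨M, hM⟩ : ∃ M, ⌈w s(x, y) / r⌉₊ = M + 1 := ⟨_, (Nat.succ_pred_eq_of_pos hN).symm⟩
  have hlast : ∀ k ∈ range M,
      subW G w r s(subPathVert w r hxy (k + 1), subPathVert w r hxy (k + 1 + 1)) = r := by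
    intro k hk
    rw [subW_subPathVert w r hxy (by rw [mem_range] at hk; omega), if_neg k.succ_ne_zero]
  rw [hM, sum_range_succ', sum_congr rfl hlast, subW_subPathVert w r hxy (by omega), if_pos rfl,
    hM, sum_const, card_range, nsmul_eq_mul, Nat.add_sub_cancel]
  ring

lemma isBareChain_subPathVert :
    IsBareChain (subGraph G w r) (subPathVert w r hxy) ⌈w s(x, y) / r⌉₊ := by
  intro k hk hkN b hb
  rw [subPathVert_of_lt w r hxy hk hkN, subGraph, SimpleGraph.fromRel_adj] at hb
  unfold subPathVert
  rcases b with z | ⟨⟨x', y', j⟩, hj⟩ <;> split_ifs <;>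
    simp_all [subRel, -Nat.ceil_le, -Nat.ceil_pos] <;> grind

lemma subPathVert_injOn : Set.InjOn (subPathVert w r hxy) (Set.Iic ⌈w s(x, y) / r⌉₊) := by
  intro i hi j hj hij
  simp only [Set.mem_Iic] at hi hj
  unfold subPathVert at hij
  split_ifs at hij <;> (try omega) <;> simp_all [hxy.ne, hxy.ne']

/-- The vertex `x` whose path `P_{xy,x}` contains the given vertex. -/
def baseVert : SubVert G w r → V
  | Sum.inl x => x
  | Sum.inr c => c.1.1

lemma baseVert_subPathVert {k : ℕ} (hk : k < ⌈w s(x, y) / r⌉₊) :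
    baseVert w r (subPathVert w r hxy k) = x := by
  unfold subPathVert
  split_ifs <;> first | omega | rfl

lemma subPathVert_ne_inl {k : ℕ} (hk : 0 < k) (hkN : k < ⌈w s(x, y) / r⌉₊) (z : V) :
    subPathVert w r hxy k ≠ Sum.inl z := by
  rw [subPathVert_of_lt w r hxy hk hkN]
  exact Sum.inr_ne_inl

lemma sum_subW_subPathVert_reflect (hN : 0 < ⌈w s(x, y) / r⌉₊) :
    ∑ k ∈ range ⌈w s(x, y) / r⌉₊, subW G w r s(subPathVert w r hxy (⌈w s(x, y) / r⌉₊ - k),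
      subPathVert w r hxy (⌈w s(x, y) / r⌉₊ - (k + 1))) = w s(x, y) := by
  rw [← sum_range_reflect]
  refine (sum_congr rfl fun k hk => ?_).trans (sum_subW_subPathVert w r hxy hN)
  rw [mem_range] at hk
  rw [Sym2.eq_swap]
  congr 3 <;> omega

variable {w r}

lemma adj_of_subGraph_adj_inl_inl {a b : V} (h : (subGraph G w r).Adj (Sum.inl a) (Sum.inl b)) :
    G.Adj a b := by
  rw [subGraph, SimpleGraph.fromRel_adj] at h
  rcases h.2 with h' | h'
  exacts [h'.1, h'.1.symm]

lemma subRel_of_subGraph_adj_inl {a : V} {c : SubVert G w r}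
    (h : (subGraph G w r).Adj (Sum.inl a) c) : subRel G w r (Sum.inl a) c := by
  rw [subGraph, SimpleGraph.fromRel_adj] at h
  rcases c with b | c
  · rcases h.2 with h' | h'
    · exact h'
    · exact ⟨h'.1.symm, by rw [Sym2.eq_swap]; exact h'.2⟩
  · exact h.2.resolve_right id

lemma exists_edge_tail_of_isPath_cons {a v : V} {z : SubVert G w r}
    (h : (subGraph G w r).Adj (Sum.inl a) z) (q : (subGraph G w r).Walk z (Sum.inl v))
    (hq : (Walk.cons h q).IsPath) :
    ∃ b, G.Adj a b ∧ ∃ q' : (subGraph G w r).Walk (Sum.inl b) (Sum.inl v), q'.IsPath ∧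
      walkLen (subW G w r) (Walk.cons h q) = w s(a, b) + walkLen (subW G w r) q' ∧
      q'.length < (Walk.cons h q).length ∧ q'.support ⊆ q.support ∧ Sum.inl a ∉ q'.support := by
  rcases z with b | ⟨⟨x, y, i⟩, hxy, hi, hiN⟩
  · refine ⟨b, adj_of_subGraph_adj_inl_inl h, q, hq.of_cons, ?_, by simp, fun _ => id,
      ((Walk.cons_isPath_iff _ _).mp hq).2⟩
    simp [subW]
  dsimp only at hxy hi hiN
  rcases subRel_of_subGraph_adj_inl h with ⟨rfl, rfl⟩ | ⟨rfl, hi⟩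
  -- `q` enters `P_{xy,x}` at `x = a`
  · obtain ⟨q', hq', hlen, hrest⟩ := (isBareChain_subPathVert w r hxy).exists_tail_of_isPath_cons
      (subW G w r) (by omega) (fun k hk hkN => subPathVert_ne_inl w r hxy hk hkN v)
      (subPathVert_zero w r hxy) (subPathVert_of_lt w r hxy one_pos (by omega))
      (subPathVert_ceil w r hxy (by omega)) h q hq
    exact ⟨y, hxy, q', hq', by rw [hlen, sum_subW_subPathVert w r hxy (by omega)], hrest⟩
  -- `q` enters `P_{xa,x}` at `a` and traverses it backwards
  · dsimp only at hi
    subst hi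
    obtain ⟨q', hq', hlen, hrest⟩ :=
      (isBareChain_subPathVert w r hxy).reflect.exists_tail_of_isPath_cons (subW G w r) (by omega)
      (fun k hk hkN => subPathVert_ne_inl w r hxy (k := ⌈w s(x, a) / r⌉₊ - k) (by omega)
        (by omega) v)
      (by simpa using subPathVert_ceil w r hxy (by omega))
      (subPathVert_of_lt w r hxy hi (by omega))
      (e := Sum.inl x) (by simp) h q hq
    refine ⟨x, hxy.symm, q', hq', ?_, hrest⟩
    rw [hlen, sum_subW_subPathVert_reflect w r hxy (by omega), Sym2.eq_swap]

lemma exists_isPath_proj {a v : V} (q : (subGraph G w r).Walk (Sum.inl a) (Sum.inl v))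
    (hq : q.IsPath) :
    ∃ p : G.Walk a v, p.IsPath ∧ walkLen w p = walkLen (subW G w r) q ∧
      ∀ z ∈ p.support, Sum.inl z ∈ q.support := by
  induction hn : q.length using Nat.strong_induction_on generalizing a with
  | _ n ih =>
  cases q with
  | nil => exact ⟨Walk.nil, Walk.IsPath.nil, rfl, by simp⟩
  | cons h q =>
    obtain ⟨b, hab, q', hq', hlen, hlt, hsub, ha⟩ := exists_edge_tail_of_isPath_cons h q hq
    obtain ⟨p, hp, hplen, hpsub⟩ := ih _ (hn ▸ hlt) q' hq' rfl
    refine ⟨Walk.cons hab p, (Walk.cons_isPath_iff _ _).mpr ⟨hp, fun h' => ha (hpsub _ h')⟩,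
      by rw [walkLen_cons, hplen, hlen], fun z hz => ?_⟩
    rw [Walk.support_cons, List.mem_cons] at hz
    rcases hz with rfl | hz
    · exact Walk.start_mem_support _
    · exact List.mem_cons_of_mem _ (hsub (hpsub z hz))

lemma exists_isPath_subPath (hxy : G.Adj x y) (hN : 0 < ⌈w s(x, y) / r⌉₊) :
    ∃ c : (subGraph G w r).Walk (Sum.inl x) (Sum.inl y), c.IsPath ∧
      walkLen (subW G w r) c = w s(x, y) ∧ ∀ z ∈ c.support, z = Sum.inl y ∨ baseVert w r z = x := by
  obtain ⟨c, hc, hlen, hsupp⟩ :=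
    exists_isPath_of_forall_adj (subW G w r) (f := subPathVert w r hxy)
    (fun k hk => subPathVert_adj w r hxy hk) (subPathVert_injOn w r hxy)
  refine ⟨c.copy (subPathVert_zero w r hxy) (subPathVert_ceil w r hxy hN), by simpa using hc,
    by rw [walkLen_copy, hlen, sum_subW_subPathVert w r hxy hN], fun z hz => ?_⟩
  rw [Walk.support_copy] at hz
  obtain ⟨k, hk, rfl⟩ := hsupp z hz
  rcases hk.lt_or_eq with hk | rfl
  · exact Or.inr (baseVert_subPathVert w r hxy hk)
  · exact Or.inl (subPathVert_ceil w r hxy hN)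

lemma exists_isPath_lift (hr : 0 < r) (hpos : ∀ e ∈ G.edgeSet, 0 < w e) {a b : V}
    (p : G.Walk a b) (hp : p.IsPath) :
    ∃ q : (subGraph G w r).Walk (Sum.inl a) (Sum.inl b), q.IsPath ∧
      walkLen (subW G w r) q = walkLen w p ∧ ∀ z ∈ q.support, baseVert w r z ∈ p.support := by
  induction p with
  | nil => exact ⟨Walk.nil, Walk.IsPath.nil, rfl, by simp [baseVert]⟩
  | @cons x y b hxy p ih =>
    rw [Walk.cons_isPath_iff] at hp
    obtain ⟨q, hq, hqlen, hqsupp⟩ := ih hp.1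
    obtain ⟨c, hc, hclen, hcsupp⟩ :=
      exists_isPath_subPath hxy (Nat.ceil_pos.mpr (div_pos (hpos _ hxy) hr))
    refine ⟨c.append q, hc.append hq fun z hzc hzq => ?_, by simp [hclen, hqlen], fun z hz => ?_⟩
    · exact (hcsupp z hzc).resolve_right fun hz => hp.2 (hz ▸ hqsupp z hzq)
    · rw [Walk.support_cons]
      rcases (Walk.mem_support_append_iff _ _).mp hz with hz | hz
      · rcases hcsupp z hz with rfl | hz
        · exact List.mem_cons_of_mem _ p.start_mem_support
        · exact hz ▸ List.mem_cons_self
      · exact List.mem_cons_of_mem _ (hqsupp z hz)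

end Subdivision

/-- Theorem (Lemma `length_subdiv`): let `(H,φ') = (G,φ,r)`. For every `k ≥ 0`, there is a path
in `G` between `u` and `v` of length `k` in `(G,φ)` iff there is a path in `H` between `u` and
`v` of length `k` in `(H,φ')`. In particular the two distances agree. -/
theorem length_subdiv (W : WGraph) (r : ℝ) (hr : 0 < r) (u v : W.V) :
    (∀ k : ℝ, 0 ≤ k →
      ((∃ p : W.G.Walk u v, p.IsPath ∧ walkLen W.w p = k) ↔
        (∃ q : (subGraph W.G W.w r).Walk (Sum.inl u) (Sum.inl v),
          q.IsPath ∧ walkLen (subW W.G W.w r) q = k))) ∧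
    wDist W.G W.w u v = wDist (subGraph W.G W.w r) (subW W.G W.w r) (Sum.inl u) (Sum.inl v) := by
  have lift (p : W.G.Walk u v) (hp : p.IsPath) :
      ∃ q : (subGraph W.G W.w r).Walk (Sum.inl u) (Sum.inl v), q.IsPath ∧
        walkLen (subW W.G W.w r) q = walkLen W.w p :=
    let ⟨q, hq, hlen, _⟩ := exists_isPath_lift hr W.pos p hp; ⟨q, hq, hlen⟩
  have proj (q : (subGraph W.G W.w r).Walk (Sum.inl u) (Sum.inl v)) (hq : q.IsPath) :
      ∃ p : W.G.Walk u v, p.IsPath ∧ walkLen W.w p = walkLen (subW W.G W.w r) q :=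
    let ⟨p, hp, hlen, _⟩ := exists_isPath_proj q hq; ⟨p, hp, hlen⟩
  refine ⟨fun k _ => ⟨?_, ?_⟩, le_antisymm (wDist_le_of_forall_isPath _ proj)
    (wDist_le_of_forall_isPath _ lift)⟩
  · rintro ⟨p, hp, rfl⟩
    exact lift p hp
  · rintro ⟨q, hq, rfl⟩
    exact proj q hq
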